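/- Let n ≥ 2 be an integer, ℓ a natural number, and a > 0 a real number. Let M : Matrix (Fin 4) (Fin 4) ℝ be the matrix with rows (ℓ, 2−ℓ−n, ℓ+2, 4−ℓ−n), (ℓ·a^{ℓ−1}, (2−ℓ−n)·a^{−(ℓ+n−1)}, (ℓ+2)·a^{ℓ+1}, (4−ℓ−n)·a^{−(ℓ+n−3)}), (0, 0, ℓ(2ℓ+n), (2ℓ+n−4)(ℓ+n−2)), and (0, 0, ℓ(2ℓ+n)·a^{ℓ−1}, (2ℓ+n−4)(ℓ+n−2)·a^{−(ℓ+n−1)}), where all entries are real numbers (ℓ and n cast to ℝ) and powers are Real.rpow. Then det M = −(a^{ℓ−1} − a^{−(ℓ+n−1)})² · ℓ² · (2ℓ+n) · (2ℓ+n−4) · (ℓ+n−2)². -/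

import Mathlib

open Real

/-! The lower-left `2 × 2` block of the matrix vanishes, so its determinant is the product of
the two diagonal `2 × 2` determinants. In each of these the second row is the first with its
columns scaled by `x = a^(ℓ-1)` and `y = a^(-(ℓ+n-1))`, so it equals `p q (y - x)` with
`p q = ℓ (2-ℓ-n)`, resp. `p q = ℓ (2ℓ+n) (2ℓ+n-4) (ℓ+n-2)`. -/

/-- The matrix obtained by imposing `∂_ν u = 0` and `∂_ν(Δu) = 0` on both boundary
components of the annulus `{a < |x| < 1} ⊆ ℝⁿ` for the biharmonic mode
`u(r) = A r^ℓ + B r^{2-ℓ-n} + C r^{ℓ+2} + D r^{4-ℓ-n}`. -/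
noncomputable def annulusZeroMatrix (n ℓ : ℕ) (a : ℝ) : Matrix (Fin 4) (Fin 4) ℝ :=
  !![(ℓ : ℝ), 2 - ℓ - n, (ℓ : ℝ) + 2, 4 - ℓ - n;
     (ℓ : ℝ) * a ^ ((ℓ : ℝ) - 1), (2 - (ℓ : ℝ) - n) * a ^ (-((ℓ : ℝ) + n - 1)),
       ((ℓ : ℝ) + 2) * a ^ ((ℓ : ℝ) + 1), (4 - (ℓ : ℝ) - n) * a ^ (-((ℓ : ℝ) + n - 3));
     0, 0, (ℓ : ℝ) * (2 * ℓ + n), (2 * (ℓ : ℝ) + n - 4) * ((ℓ : ℝ) + n - 2);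
     0, 0, (ℓ : ℝ) * (2 * ℓ + n) * a ^ ((ℓ : ℝ) - 1),
       (2 * (ℓ : ℝ) + n - 4) * ((ℓ : ℝ) + n - 2) * a ^ (-((ℓ : ℝ) + n - 1))]

theorem Matrix.det_fin_four_of_lowerLeft_eq_zero {R : Type*} [CommRing R]
    (M : Matrix (Fin 4) (Fin 4) R) (h20 : M 2 0 = 0) (h21 : M 2 1 = 0) (h30 : M 3 0 = 0)
    (h31 : M 3 1 = 0) :
    M.det = !![M 0 0, M 0 1; M 1 0, M 1 1].det * !![M 2 2, M 2 3; M 3 2, M 3 3].det := by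
  have hM : M = Matrix.reindex finSumFinEquiv finSumFinEquiv
      (Matrix.fromBlocks !![M 0 0, M 0 1; M 1 0, M 1 1] !![M 0 2, M 0 3; M 1 2, M 1 3] 0
        !![M 2 2, M 2 3; M 3 2, M 3 3]) := by
    ext i j
    fin_cases i <;> fin_cases j <;> simp [finSumFinEquiv, Fin.addCases, h20, h21, h30, h31]
  conv_lhs => rw [hM]
  rw [Matrix.det_reindex_self, Matrix.det_fromBlocks_zero₂₁]

theorem Matrix.det_fin_two_of_mul {R : Type*} [CommRing R] (p q x y : R) :
    (!![p, q; p * x, q * y] : Matrix (Fin 2) (Fin 2) R).det = p * q * (y - x) := by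
  rw [Matrix.det_fin_two_of]
  ring

theorem annulusZeroMatrix_det_general (n : ℕ) (ℓ : ℕ) (a : ℝ) :
    (annulusZeroMatrix n ℓ a).det =
      -(a ^ ((ℓ : ℝ) - 1) - a ^ (-((ℓ : ℝ) + n - 1))) ^ 2 * (ℓ : ℝ) ^ 2 *
        (2 * (ℓ : ℝ) + n) * (2 * (ℓ : ℝ) + n - 4) * ((ℓ : ℝ) + n - 2) ^ 2 := by
  rw [Matrix.det_fin_four_of_lowerLeft_eq_zero _ rfl rfl rfl rfl]
  simp only [annulusZeroMatrix, Matrix.of_apply, Matrix.cons_val]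
  rw [Matrix.det_fin_two_of_mul, Matrix.det_fin_two_of_mul]
  ring

theorem annulusZeroMatrix_det (n : ℕ) (hn : 2 ≤ n) (ℓ : ℕ) (a : ℝ) (ha : 0 < a) :
    (annulusZeroMatrix n ℓ a).det =
      -(a ^ ((ℓ : ℝ) - 1) - a ^ (-((ℓ : ℝ) + n - 1))) ^ 2 * (ℓ : ℝ) ^ 2 *
        (2 * (ℓ : ℝ) + n) * (2 * (ℓ : ℝ) + n - 4) * ((ℓ : ℝ) + n - 2) ^ 2 :=
  annulusZeroMatrix_det_general n ℓ a
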